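/- Let k, k' be finite fields of characteristic p and let u ∈ k ⊗_{𝔽_p} k' satisfy (Frob ⊗ id)(u) = u, where Frob is the p-power Frobenius of k. Then u ∈ 𝔽_p ⊗_{𝔽_p} k' ≅ k'. Consequently, an element of a finite tensor product ⊗_{α,𝔽_p} 𝔽_{q_α} fixed by each partial Frobenius lies in 𝔽_p. -/

import Mathlib

/-!
For every field `k` of characteristic `p` the sequence `0 → 𝔽_p → k → k`, the second map being
`Frob - 1`, is exact, because `X ^ p - X` has exactly the `p` roots `𝔽_p`. Tensoring with an
`𝔽_p`-vector space `V` keeps it exact, so the vectors of `k ⊗ V` fixed by `Frob ⊗ id` are those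
of `𝔽_p ⊗ V = 1 ⊗ V`.

For a finite tensor product, split off one factor `K i₀`. Invariance under the partial Frobenius
at `i₀` puts `u` in `1 ⊗ W`, with `W` the tensor product of the other factors, on which the other
partial Frobenius maps act; induction on the number of factors.
-/

open scoped TensorProduct
open PiTensorProduct Polynomial

variable {p : ℕ} [Fact p.Prime]

theorem frobeniusAlgHom_zmod_apply {R : Type*} [CommRing R] [Algebra (ZMod p) R] (x : R) :
    FiniteField.frobeniusAlgHom (ZMod p) R x = x ^ p := by
  rw [FiniteField.coe_frobeniusAlgHom, ZMod.card]

theorem mem_range_algebraMap_of_pow_eq_self {k : Type*} [Field k] [Algebra (ZMod p) k] {x : k}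
    (hx : x ^ p = x) : x ∈ Set.range (algebraMap (ZMod p) k) := by
  have hp := (Fact.out : p.Prime).one_lt
  have hroots : (X ^ p - X : (ZMod p)[X]).roots = Finset.univ.val := by
    simpa [ZMod.card] using FiniteField.roots_X_pow_card_sub_X (ZMod p)
  have hcard : Multiset.card (X ^ p - X : (ZMod p)[X]).roots =
      (X ^ p - X : (ZMod p)[X]).natDegree := by
    simp [hroots, FiniteField.X_pow_card_sub_X_natDegree_eq _ hp]
  have hx' : x ∈ ((X ^ p - X : (ZMod p)[X]).map (algebraMap (ZMod p) k)).roots := by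
    rw [mem_roots (by simpa using FiniteField.X_pow_card_sub_X_ne_zero k hp)]
    simp [hx]
  rw [← roots_map_of_injective_of_card_eq_natDegree (algebraMap (ZMod p) k).injective hcard,
    hroots] at hx'
  simpa using hx'

theorem exact_algebraMap_frobeniusAlgHom_sub_id (k : Type*) [Field k] [Algebra (ZMod p) k] :
    Function.Exact (Algebra.linearMap (ZMod p) k)
      ((FiniteField.frobeniusAlgHom (ZMod p) k).toLinearMap -
        LinearMap.id (R := ZMod p) (M := k)) := by
  intro x
  simp only [LinearMap.sub_apply, AlgHom.toLinearMap_apply, frobeniusAlgHom_zmod_apply,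
    LinearMap.id_apply, sub_eq_zero, Algebra.coe_linearMap]
  refine ⟨mem_range_algebraMap_of_pow_eq_self, ?_⟩
  rintro ⟨c, rfl⟩
  rw [← map_pow, ZMod.pow_card]

theorem exists_eq_one_tmul_of_rTensor_frobeniusAlgHom_eq {k V : Type*} [Field k]
    [Algebra (ZMod p) k] [AddCommGroup V] [Module (ZMod p) V] {u : k ⊗[ZMod p] V}
    (hu : (FiniteField.frobeniusAlgHom (ZMod p) k).toLinearMap.rTensor V u = u) :
    ∃ v : V, u = 1 ⊗ₜ v := by
  obtain ⟨t, rfl⟩ := (Module.Flat.rTensor_exact V (exact_algebraMap_frobeniusAlgHom_sub_id k) u).1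
    (by rw [LinearMap.rTensor_sub, LinearMap.sub_apply, hu, LinearMap.rTensor_id,
      LinearMap.id_apply, sub_self])
  refine ⟨TensorProduct.lid (ZMod p) V t, ?_⟩
  nth_rw 1 [← (TensorProduct.lid (ZMod p) V).symm_apply_apply t]
  rw [TensorProduct.lid_symm_apply, LinearMap.rTensor_tmul, Algebra.linearMap_apply, map_one]

theorem apply_eq_rTensor_frobeniusAlgHom_of_tmul {k V : Type*} [Field k] [Algebra (ZMod p) k]
    [AddCommGroup V] [Module (ZMod p) V] (F : k ⊗[ZMod p] V →+ k ⊗[ZMod p] V)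
    (hF : ∀ (a : k) (v : V), F (a ⊗ₜ v) = (a ^ p) ⊗ₜ v) (u : k ⊗[ZMod p] V) :
    F u = (FiniteField.frobeniusAlgHom (ZMod p) k).toLinearMap.rTensor V u := by
  have : F.toZModLinearMap p = (FiniteField.frobeniusAlgHom (ZMod p) k).toLinearMap.rTensor V :=
    TensorProduct.ext' fun a v ↦ by simp [hF]
  exact congr($this u)

section PartialFrobenius

variable {ι : Type*} [DecidableEq ι] {K : ι → Type*} [∀ i, Field (K i)]
  [∀ i, Algebra (ZMod p) (K i)]

variable (p K) in
noncomputable def partialFrobenius (α : ι) : (⨂[ZMod p] i, K i) →ₗ[ZMod p] ⨂[ZMod p] i, K i :=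
  PiTensorProduct.map <| Function.update (fun _ ↦ LinearMap.id)
    α (FiniteField.frobeniusAlgHom (ZMod p) (K α)).toLinearMap

theorem partialFrobenius_tprod (α : ι) (x : ∀ i, K i) :
    partialFrobenius p K α (tprod (ZMod p) x) =
      tprod (ZMod p) (Function.update x α (x α ^ p)) := by
  rw [partialFrobenius, map_tprod]
  congr 1
  ext i
  rcases eq_or_ne i α with rfl | h
  · simp
  · simp [Function.update_of_ne h]

theorem apply_eq_partialFrobenius_of_tprod {α : ι}
    (F : (⨂[ZMod p] i, K i) →+ ⨂[ZMod p] i, K i)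
    (hF : ∀ x : ∀ i, K i,
      F (tprod (ZMod p) x) = tprod (ZMod p) (Function.update x α (x α ^ p)))
    (u : ⨂[ZMod p] i, K i) : F u = partialFrobenius p K α u := by
  have : F.toZModLinearMap p = partialFrobenius p K α :=
    PiTensorProduct.ext <| MultilinearMap.ext fun x ↦ by simp [hF, partialFrobenius_tprod]
  exact congr($this u)

variable (i₀ : ι)

variable (p K) in
noncomputable def equivTensorPiTensorComplSingleton :
    (⨂[ZMod p] i, K i) ≃ₗ[ZMod p] K i₀ ⊗[ZMod p] (⨂[ZMod p] (i : ({i₀}ᶜ : Set ι)), K i) :=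
  (equivPiTensorComplSingletonTensor (ZMod p) K i₀).trans (TensorProduct.comm _ _ _)

theorem equivTensorPiTensorComplSingleton_partialFrobenius_self (u : ⨂[ZMod p] i, K i) :
    equivTensorPiTensorComplSingleton p K i₀ (partialFrobenius p K i₀ u) =
      (FiniteField.frobeniusAlgHom (ZMod p) (K i₀)).toLinearMap.rTensor _
        (equivTensorPiTensorComplSingleton p K i₀ u) := by
  have : (equivTensorPiTensorComplSingleton p K i₀).toLinearMap ∘ₗ partialFrobenius p K i₀ =
      (FiniteField.frobeniusAlgHom (ZMod p) (K i₀)).toLinearMap.rTensor _ ∘ₗ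
        (equivTensorPiTensorComplSingleton p K i₀).toLinearMap := by
    ext x
    simp only [equivTensorPiTensorComplSingleton, LinearMap.compMultilinearMap_apply,
      LinearMap.coe_comp, LinearEquiv.coe_coe, LinearEquiv.trans_apply, Function.comp_apply,
      partialFrobenius_tprod, equivPiTensorComplSingletonTensor_tprod, TensorProduct.comm_tmul,
      Function.update_self, LinearMap.rTensor_tmul, AlgHom.toLinearMap_apply,
      frobeniusAlgHom_zmod_apply]
    congr 2
    exact funext fun j ↦ Function.update_of_ne j.2 _ _
  exact congr($this u)

theorem equivTensorPiTensorComplSingleton_partialFrobenius_of_ne (j : ({i₀}ᶜ : Set ι))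
    (u : ⨂[ZMod p] i, K i) :
    equivTensorPiTensorComplSingleton p K i₀ (partialFrobenius p K j u) =
      (partialFrobenius p (fun j : ({i₀}ᶜ : Set ι) ↦ K j) j).lTensor _
        (equivTensorPiTensorComplSingleton p K i₀ u) := by
  have : (equivTensorPiTensorComplSingleton p K i₀).toLinearMap ∘ₗ partialFrobenius p K j =
      (partialFrobenius p (fun j : ({i₀}ᶜ : Set ι) ↦ K j) j).lTensor _ ∘ₗ
        (equivTensorPiTensorComplSingleton p K i₀).toLinearMap := by
    ext x
    simp [equivTensorPiTensorComplSingleton, partialFrobenius_tprod,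
      Function.update_of_ne (Ne.symm j.2),
      Function.update_comp_eq_of_injective' x Subtype.val_injective]
  exact congr($this u)

theorem equivTensorPiTensorComplSingleton_one :
    equivTensorPiTensorComplSingleton p K i₀ 1 = 1 ⊗ₜ 1 := by
  simp [equivTensorPiTensorComplSingleton, PiTensorProduct.one_def]
  rfl

end PartialFrobenius

theorem mem_range_algebraMap_of_forall_partialFrobenius_eq {ι : Type*} [Finite ι]
    [DecidableEq ι] {K : ι → Type*} [∀ i, Field (K i)] [∀ i, Algebra (ZMod p) (K i)]
    {u : ⨂[ZMod p] i, K i} (hu : ∀ α, partialFrobenius p K α u = u) :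
    u ∈ Set.range (algebraMap (ZMod p) (⨂[ZMod p] i, K i)) := by
  obtain ⟨n, hn⟩ : ∃ n, Nat.card ι = n := ⟨_, rfl⟩
  induction n generalizing ι with
  | zero =>
    have : IsEmpty ι := (Nat.card_eq_zero.1 hn).resolve_right (not_infinite_iff_finite.2 ‹_›)
    refine ⟨isEmptyEquiv ι u, (isEmptyEquiv ι).injective ?_⟩
    simp [Algebra.algebraMap_eq_smul_one, PiTensorProduct.one_def]
  | succ n ih =>
    obtain ⟨i₀⟩ : Nonempty ι := (Nat.card_pos_iff.1 (by omega)).1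
    set e := equivTensorPiTensorComplSingleton p K i₀
    obtain ⟨w, hw⟩ := exists_eq_one_tmul_of_rTensor_frobeniusAlgHom_eq (u := e u)
      (by rw [← equivTensorPiTensorComplSingleton_partialFrobenius_self, hu])
    have hw_fixed (j : ({i₀}ᶜ : Set ι)) : partialFrobenius p _ j w = w := by
      have h := equivTensorPiTensorComplSingleton_partialFrobenius_of_ne i₀ j u
      rw [hu, hw, LinearMap.lTensor_tmul] at h
      rw [← sub_eq_zero, ← Module.FaithfullyFlat.one_tmul_eq_zero_iff (ZMod p) _ (A := K i₀),
        TensorProduct.tmul_sub, ← h, sub_self]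
    obtain ⟨c, rfl⟩ := ih hw_fixed (Set.ncard_compl_of_ncard_eq_add _ (by simpa using hn))
    refine ⟨c, e.injective ?_⟩
    rw [hw, Algebra.algebraMap_eq_smul_one, Algebra.algebraMap_eq_smul_one, map_smul,
      equivTensorPiTensorComplSingleton_one, TensorProduct.tmul_smul]

open scoped Classical
theorem statement_11_general (p : ℕ) [Fact p.Prime]
    (k k' : Type) [Field k] [Field k']
    [Algebra (ZMod p) k] [Algebra (ZMod p) k'] :
    (∀ F : k ⊗[ZMod p] k' →+* k ⊗[ZMod p] k',
      (∀ (a : k) (b : k'), F (a ⊗ₜ[ZMod p] b) = (a ^ p) ⊗ₜ[ZMod p] b) →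
      ∀ u : k ⊗[ZMod p] k', F u = u → ∃ b : k', u = (1 : k) ⊗ₜ[ZMod p] b)
    ∧
    (∀ (ι : Type) (_ : Fintype ι) (K : ι → Type)
      (_ : ∀ i, Field (K i)) (_ : ∀ i, Finite (K i)) (_ : ∀ i, Algebra (ZMod p) (K i))
      (F : ∀ _ : ι, (⨂[ZMod p] i, K i) →+* (⨂[ZMod p] i, K i)),
      (∀ (α : ι) (x : ∀ i, K i),
        F α (PiTensorProduct.tprod (ZMod p) x) =
          PiTensorProduct.tprod (ZMod p) (Function.update x α ((x α) ^ p))) →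
      ∀ u : ⨂[ZMod p] i, K i, (∀ α, F α u = u) →
        ∃ c : ZMod p, u = algebraMap (ZMod p) (⨂[ZMod p] i, K i) c) := by
  refine ⟨fun F hF u hu ↦ ?_, fun ι _ K _ _ _ F hF u hu ↦ ?_⟩
  · exact exists_eq_one_tmul_of_rTensor_frobeniusAlgHom_eq
      ((apply_eq_rTensor_frobeniusAlgHom_of_tmul F.toAddMonoidHom hF u).symm.trans hu)
  · obtain ⟨c, hc⟩ := mem_range_algebraMap_of_forall_partialFrobenius_eq fun α ↦
      (apply_eq_partialFrobenius_of_tprod (F α).toAddMonoidHom (hF α) u).symm.trans (hu α)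
    exact ⟨c, hc.symm⟩

/-- Let `k, k'` be finite fields of characteristic `p` and let
`u ∈ k ⊗_{𝔽_p} k'` satisfy `(Frob ⊗ id)(u) = u`, where `Frob` is the `p`-power Frobenius
of `k`.  Then `u ∈ 𝔽_p ⊗_{𝔽_p} k' ≅ k'`.  Consequently, an element of a finite tensor
product `⊗_{α, 𝔽_p} 𝔽_{q_α}` fixed by each partial Frobenius lies in `𝔽_p`. -/
theorem statement_11 (p : ℕ) [Fact p.Prime]
    (k k' : Type) [Field k] [Field k'] [Finite k] [Finite k']
    [Algebra (ZMod p) k] [Algebra (ZMod p) k'] :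
    (∀ F : k ⊗[ZMod p] k' →+* k ⊗[ZMod p] k',
      (∀ (a : k) (b : k'), F (a ⊗ₜ[ZMod p] b) = (a ^ p) ⊗ₜ[ZMod p] b) →
      ∀ u : k ⊗[ZMod p] k', F u = u → ∃ b : k', u = (1 : k) ⊗ₜ[ZMod p] b)
    ∧
    (∀ (ι : Type) (_ : Fintype ι) (K : ι → Type)
      (_ : ∀ i, Field (K i)) (_ : ∀ i, Finite (K i)) (_ : ∀ i, Algebra (ZMod p) (K i))
      (F : ∀ _ : ι, (⨂[ZMod p] i, K i) →+* (⨂[ZMod p] i, K i)),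
      (∀ (α : ι) (x : ∀ i, K i),
        F α (PiTensorProduct.tprod (ZMod p) x) =
          PiTensorProduct.tprod (ZMod p) (Function.update x α ((x α) ^ p))) →
      ∀ u : ⨂[ZMod p] i, K i, (∀ α, F α u = u) →
        ∃ c : ZMod p, u = algebraMap (ZMod p) (⨂[ZMod p] i, K i) c) :=
  statement_11_general p k k'
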